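/- arXiv:2103.16394 — 3 statements merged into one kernel-verified Lean document; each statement's English description precedes it below -/
import Mathlib

section
/- Let B be a strict 2-category (a bicategory whose associators and unitors are identities), let c be an object of B, and for every object a of B fix a 1-cell f_a : a ⟶ c. Then the following are equivalent: (1) there exists a contraction γ on B with center c such that γ_a = f_a for every object a; (2) f_c = 𝟙 c and, for every object a, the 1-cell f_a is a terminal object of the hom-category B(a, c). -/
open CategoryTheory CategoryTheory.Limits

universe w v u

/-- A contraction on a strict 2-category `B` with center `c`:
1-cells `obj a : a ⟶ c` with `obj c = 𝟙 c`, and 2-cells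
`app f : f ≫ obj b ⟶ obj a` for every 1-cell `f : a ⟶ b`, subject to the
identity, composition, 2-cell and normality laws. -/
structure Contraction (B : Type u) [Bicategory.{w, v} B] [Bicategory.Strict B] (c : B) where
  obj : ∀ a : B, a ⟶ c
  obj_center : obj c = 𝟙 c
  app : ∀ {a b : B} (f : a ⟶ b), f ≫ obj b ⟶ obj a
  app_id : ∀ a : B, app (𝟙 a) = eqToHom (by simp)
  app_comp : ∀ {a b b' : B} (f : a ⟶ b) (g : b ⟶ b'),
    app (f ≫ g) = eqToHom (by simp) ≫ Bicategory.whiskerLeft f (app g) ≫ app f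
  app_naturality : ∀ {a b : B} {f g : a ⟶ b} (θ : f ⟶ g),
    app f = Bicategory.whiskerRight θ (obj b) ≫ app g
  app_norm : ∀ a : B, app (obj a) = eqToHom (by rw [obj_center]; simp)

/-! The 2-cell law applied to `θ : g ⟶ γ_a`, together with normality
`γ_{γ_a} = 𝟙` and `γ_c = 𝟙 c`, forces `θ = γ_g`, so `γ_a` is terminal in `B(a, c)`.
Conversely, if every `f_a` is terminal, take `γ_g` to be the unique 2-cell into `f_a`;
all four laws are equations between parallel 2-cells into a terminal object. -/

variable {B : Type u} [Bicategory.{w, v} B] [Bicategory.Strict B]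

open Bicategory in
theorem Bicategory.Strict.whiskerRight_of_eq_id {a b : B} {f g : a ⟶ b} (η : f ⟶ g)
    {k : b ⟶ b} (hk : k = 𝟙 b) :
    η ▷ k =
      eqToHom (by rw [hk, Category.comp_id]) ≫ η ≫ eqToHom (by rw [hk, Category.comp_id]) := by
  subst hk
  simp [whiskerRight_id, Strict.rightUnitor_eqToIso]

namespace Contraction

variable {c : B}

theorem eq_eqToHom_comp_app (γ : Contraction B c) {a : B} {g : a ⟶ c} (θ : g ⟶ γ.obj a) :
    θ = eqToHom (by rw [γ.obj_center, Category.comp_id]) ≫ γ.app g := by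
  rw [γ.app_naturality θ, γ.app_norm, Bicategory.Strict.whiskerRight_of_eq_id θ γ.obj_center]
  simp

def isTerminalObj (γ : Contraction B c) (a : B) : IsTerminal (γ.obj a) :=
  IsTerminal.ofUniqueHom (fun g => eqToHom (by rw [γ.obj_center, Category.comp_id]) ≫ γ.app g)
    fun _ θ => γ.eq_eqToHom_comp_app θ

def ofIsTerminal (f : ∀ a : B, a ⟶ c) (hc : f c = 𝟙 c) (hf : ∀ a, IsTerminal (f a)) :
    Contraction B c where
  obj := f
  obj_center := hc
  app _ := (hf _).from _
  app_id _ := (hf _).hom_ext _ _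
  app_comp _ _ := (hf _).hom_ext _ _
  app_naturality _ := (hf _).hom_ext _ _
  app_norm _ := (hf _).hom_ext _ _

end Contraction

/-- A choice of 1-cells `f a : a ⟶ c` extends to a contraction with center `c`
if and only if `f c = 𝟙 c` and each `f a` is terminal in the hom-category `B(a, c)`. -/
theorem contraction_exists_iff_terminal {B : Type u} [Bicategory.{w, v} B]
    [Bicategory.Strict B] (c : B) (f : ∀ a : B, a ⟶ c) :
    (∃ γ : Contraction B c, ∀ a : B, γ.obj a = f a) ↔
      (f c = 𝟙 c ∧ ∀ a : B, Nonempty (IsTerminal (f a))) := by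
  constructor
  · rintro ⟨γ, hγ⟩
    obtain rfl : γ.obj = f := funext hγ
    exact ⟨γ.obj_center, fun a => ⟨γ.isTerminalObj a⟩⟩
  · rintro ⟨hc, hf⟩
    exact ⟨.ofIsTerminal f hc fun a => (hf a).some, fun _ => rfl⟩
end

section
/- Let B be a strict 2-category, c an object, and let γ be data satisfying all the axioms of a contraction with center c except possibly normality: 1-cells γ_a : a ⟶ c with γ_c = 𝟙 c and 2-cells γ_f : f ≫ γ_b ⟶ γ_a satisfying the identity, composition and 2-cell laws. If for an object x the endo-2-cell γ_{γ_x} : γ_x ⟶ γ_x (using γ_c = 𝟙 c and strictness) is invertible, then γ_{γ_x} = 𝟙 (γ_x). -/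
open CategoryTheory CategoryTheory.Limits

universe w v u

/-- Data satisfying all the axioms of a contraction on a strict 2-category `B`
with center `c` except possibly normality. -/
structure PreContraction (B : Type u) [Bicategory.{w, v} B] [Bicategory.Strict B] (c : B) where
  obj : ∀ a : B, a ⟶ c
  obj_center : obj c = 𝟙 c
  app : ∀ {a b : B} (f : a ⟶ b), f ≫ obj b ⟶ obj a
  app_id : ∀ a : B, app (𝟙 a) = eqToHom (by simp)
  app_comp : ∀ {a b b' : B} (f : a ⟶ b) (g : b ⟶ b'),
    app (f ≫ g) = eqToHom (by simp) ≫ Bicategory.whiskerLeft f (app g) ≫ app f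
  app_naturality : ∀ {a b : B} {f g : a ⟶ b} (θ : f ⟶ g),
    app f = Bicategory.whiskerRight θ (obj b) ≫ app g

/-- For a 1-cell `h : x ⟶ c`, the 2-cell `γ_h : h ⟶ γ_x` obtained from `γ.app h`
using `γ.obj c = 𝟙 c` and strictness. -/
def PreContraction.app' {B : Type u} [Bicategory.{w, v} B] [Bicategory.Strict B] {c : B}
    (γ : PreContraction B c) {x : B} (h : x ⟶ c) : h ⟶ γ.obj x :=
  eqToHom (by rw [γ.obj_center]; simp) ≫ γ.app h

theorem Bicategory.whiskerRight_eq_of_eq_id {B : Type u} [Bicategory.{w, v} B]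
    [Bicategory.Strict B] {a b : B} {f g : a ⟶ b} (η : f ⟶ g) {k : b ⟶ b} (hk : k = 𝟙 b) :
    Bicategory.whiskerRight η k = eqToHom (by rw [hk]; simp) ≫ η ≫ eqToHom (by rw [hk]; simp) := by
  subst hk
  simp [Bicategory.whiskerRight_id, Bicategory.Strict.rightUnitor_eqToIso]

theorem PreContraction.app'_eq_comp_app' {B : Type u} [Bicategory.{w, v} B]
    [Bicategory.Strict B] {c : B} (γ : PreContraction B c) {x : B} {h h' : x ⟶ c}
    (θ : h ⟶ h') : γ.app' h = θ ≫ γ.app' h' := by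
  rw [PreContraction.app', PreContraction.app', γ.app_naturality θ,
    Bicategory.whiskerRight_eq_of_eq_id θ γ.obj_center]
  simp

/-- If the endo-2-cell `γ_{γ_x} : γ_x ⟶ γ_x` of a pre-contraction is invertible,
then it is the identity. -/
theorem preContraction_selfApp_eq_id {B : Type u} [Bicategory.{w, v} B]
    [Bicategory.Strict B] {c : B} (γ : PreContraction B c) (x : B)
    (h : IsIso (γ.app' (γ.obj x))) :
    γ.app' (γ.obj x) = 𝟙 (γ.obj x) := by
  have idempotent := γ.app'_eq_comp_app' (γ.app' (γ.obj x))
  rw [← cancel_epi (γ.app' (γ.obj x)), ← idempotent, Category.comp_id]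
end

section
/- Let C be a category and c an object of C. Then c is a terminal object of C if and only if there exists a functor S : C ⥤ Over c such that S composed with the forgetful functor Over c ⥤ C equals the identity functor of C, and S sends c to the object of Over c determined by the identity morphism 𝟙 c. -/
open CategoryTheory CategoryTheory.Limits

universe v u

/-!
A section `S` of `Over c ⥤ C` gives morphisms `ι x : x ⟶ c`, natural in `x`: the structure maps
of the `S x`. Naturality says `f ≫ ι c = ι x` for every `f : x ⟶ c`, so if `ι c = 𝟙 c` every such
`f` equals `ι x`. Conversely, if `c` is terminal, the unique maps `x ⟶ c` assemble into a section.
-/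

namespace CategoryTheory

variable {C : Type u} [Category.{v} C] {c : C}

def Limits.IsTerminal.ofNaturalHoms (ι : ∀ x, x ⟶ c) (hι : ∀ {x y} (f : x ⟶ y), f ≫ ι y = ι x)
    (hc : ι c = 𝟙 c) : IsTerminal c :=
  IsTerminal.ofUniqueHom ι fun x f => by rw [← hι f, hc, Category.comp_id]

lemma Over.map_comp_app_comp_hom (S : C ⥤ Over c) (α : 𝟭 C ⟶ S ⋙ Over.forget c) {x y : C}
    (f : x ⟶ y) : f ≫ α.app y ≫ (S.obj y).hom = α.app x ≫ (S.obj x).hom :=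
  calc f ≫ α.app y ≫ (S.obj y).hom = α.app x ≫ (S.map f).left ≫ (S.obj y).hom :=
        α.naturality_assoc f _
    _ = α.app x ≫ (S.obj x).hom := congrArg (α.app x ≫ ·) (Over.w (S.map f))

lemma Over.eqToHom_comp_hom_of_eq_mk_id {X : Over c} (h : X = Over.mk (𝟙 c)) (h' : c = X.left) :
    eqToHom h' ≫ X.hom = 𝟙 c := by
  subst h
  simp

end CategoryTheory

/-- An object `c` of a category `C` is terminal if and only if the projection
`Over c ⥤ C` admits a (strict) section sending `c` to `𝟙 c`. -/
theorem isTerminal_iff_section_of_over_forget {C : Type u} [Category.{v} C] (c : C) :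
    Nonempty (IsTerminal c) ↔
      ∃ S : C ⥤ Over c, S ⋙ Over.forget c = 𝟭 C ∧ S.obj c = Over.mk (𝟙 c) := by
  constructor
  · rintro ⟨hc⟩
    exact ⟨(𝟭 C).toOver c hc.from fun _ => hc.hom_ext _ _, rfl,
      congrArg Over.mk (hc.hom_ext _ _)⟩
  · rintro ⟨S, hS, hSc⟩
    let α : 𝟭 C ⟶ S ⋙ Over.forget c := eqToHom hS.symm
    refine ⟨.ofNaturalHoms (fun x => α.app x ≫ (S.obj x).hom) (Over.map_comp_app_comp_hom S α) ?_⟩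
    simp only [α, eqToHom_app]
    exact Over.eqToHom_comp_hom_of_eq_mk_id hSc _
end
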